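/- arXiv:2112.01461 — 3 statements merged into one kernel-verified Lean document; each statement's English description precedes it below -/
import Mathlib

section
/- For the monomial g(x,y) = x^α·y^β with α, β positive reals, α ≥ β, the measure of the sublevel set {(x,y) ∈ (0,1)² : x^α·y^β < δ} is comparable to δ^(1/α) (times a logarithmic factor when α = β): precisely, if α > β, there exist constants c, C > 0 such that for all 0 < δ < 1/2, c·δ^(1/α) ≤ m({(x,y) ∈ (0,1)² : x^α y^β < δ}) ≤ C·δ^(1/α). -/
open MeasureTheory Set

/-- For α > β > 0 the sublevel set {(x,y) ∈ (0,1)² : x^α y^β < δ} has measure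
    comparable to δ^(1/α). -/
theorem sublevel_monomial_measure (α β : ℝ) (hβ : 0 < β) (hαβ : β < α) :
    ∃ c C : ℝ, 0 < c ∧ 0 < C ∧ ∀ δ : ℝ, 0 < δ → δ < 1 / 2 →
      c * δ ^ (1 / α) ≤
        (volume {p : ℝ × ℝ | p.1 ∈ Ioo (0 : ℝ) 1 ∧ p.2 ∈ Ioo (0 : ℝ) 1 ∧
          p.1 ^ α * p.2 ^ β < δ}).toReal ∧
      (volume {p : ℝ × ℝ | p.1 ∈ Ioo (0 : ℝ) 1 ∧ p.2 ∈ Ioo (0 : ℝ) 1 ∧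
          p.1 ^ α * p.2 ^ β < δ}).toReal ≤ C * δ ^ (1 / α) := by
  have hα : 0 < α := hβ.trans hαβ
  have hαβ' : (0:ℝ) < α - β := by linarith
  refine ⟨1, 1 + β / (α - β), one_pos, by positivity, ?_⟩
  intro δ hδ hδ2
  set E := {p : ℝ × ℝ | p.1 ∈ Ioo (0 : ℝ) 1 ∧ p.2 ∈ Ioo (0 : ℝ) 1 ∧
      p.1 ^ α * p.2 ^ β < δ} with hE
  set t := δ ^ (1 / α) with ht
  have ht0 : 0 < t := Real.rpow_pos_of_pos hδ _
  have hδ1 : δ < 1 := by linarith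
  have ht1 : t < 1 := Real.rpow_lt_one hδ.le hδ1 (by positivity)
  have htα : t ^ α = δ := by
    rw [ht, ← Real.rpow_mul hδ.le, one_div_mul_cancel hα.ne', Real.rpow_one]
  have hmeas : MeasurableSet E := by
    have : E = (Ioo (0:ℝ) 1 ×ˢ Ioo (0:ℝ) 1) ∩ {p : ℝ × ℝ | p.1 ^ α * p.2 ^ β < δ} := by
      ext p; simp [hE, Set.mem_prod, and_assoc]
    rw [this]
    exact (measurableSet_Ioo.prod measurableSet_Ioo).inter
      (measurableSet_lt (by fun_prop) measurable_const)
  -- finiteness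
  have hEsub : E ⊆ Ioo (0:ℝ) 1 ×ˢ Ioo (0:ℝ) 1 := fun p hp => ⟨hp.1, hp.2.1⟩
  have hfin : volume E ≠ ⊤ := by
    refine ne_top_of_le_ne_top ?_ (measure_mono hEsub)
    rw [Measure.volume_eq_prod, Measure.prod_prod, Real.volume_Ioo]
    simp
  constructor
  · -- lower bound
    have hsub : Ioo (0:ℝ) t ×ˢ Ioo (0:ℝ) 1 ⊆ E := by
      rintro ⟨x, y⟩ ⟨⟨hx0, hxt⟩, hy⟩
      refine ⟨⟨hx0, hxt.trans ht1⟩, hy, ?_⟩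
      calc x ^ α * y ^ β ≤ x ^ α * 1 := by
            have : y ^ β ≤ 1 := Real.rpow_le_one hy.1.le hy.2.le hβ.le
            have hx : (0:ℝ) ≤ x ^ α := Real.rpow_nonneg hx0.le _
            nlinarith
        _ = x ^ α := mul_one _
        _ < t ^ α := Real.rpow_lt_rpow hx0.le hxt hα
        _ = δ := htα
    have hle : ENNReal.ofReal t ≤ volume E := by
      have := measure_mono (μ := volume) hsub
      rwa [Measure.volume_eq_prod, Measure.prod_prod, Real.volume_Ioo, Real.volume_Ioo,
        sub_zero, sub_zero, ENNReal.ofReal_one, mul_one] at this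
    rw [one_mul]
    calc δ ^ (1/α) = (ENNReal.ofReal t).toReal := by rw [ENNReal.toReal_ofReal ht0.le]
      _ ≤ (volume E).toReal := ENNReal.toReal_mono hfin hle
  · -- upper bound
    set r : ℝ := -(α / β) with hr
    have hr1 : r < -1 := by
      rw [hr, neg_lt_neg_iff]
      rw [lt_div_iff₀ hβ]; linarith
    set E₂ := E ∩ (Ici t ×ˢ (univ : Set ℝ)) with hE₂
    have hcover : E ⊆ (Ioo (0:ℝ) t ×ˢ Ioo (0:ℝ) 1) ∪ E₂ := by
      rintro ⟨x, y⟩ hp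
      rcases lt_or_ge x t with h | h
      · exact Or.inl ⟨⟨hp.1.1, h⟩, hp.2.1⟩
      · exact Or.inr ⟨hp, h, mem_univ _⟩
    have hmeas₂ : MeasurableSet E₂ :=
      hmeas.inter (measurableSet_Ici.prod MeasurableSet.univ)
    -- slice bound
    have hslice : ∀ x : ℝ, volume (Prod.mk x ⁻¹' E₂) ≤
        (Ici t).indicator (fun x => ENNReal.ofReal (δ ^ (1/β) * x ^ r)) x := by
      intro x
      by_cases hx : x ∈ Ici t
      · rw [indicator_of_mem hx]
        have hx0 : 0 < x := ht0.trans_le hx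
        have hxα : 0 < x ^ α := Real.rpow_pos_of_pos hx0 _
        have hsub2 : Prod.mk x ⁻¹' E₂ ⊆ Ioo 0 (δ ^ (1/β) * x ^ r) := by
          rintro y ⟨⟨hx1, hy1, hxy⟩, -⟩
          refine ⟨hy1.1, ?_⟩
          have hyβ : y ^ β < δ / x ^ α := by
            rw [lt_div_iff₀ hxα]; nlinarith [hxy]
          have : y = (y ^ β) ^ (1/β) := by
            rw [← Real.rpow_mul hy1.1.le, mul_one_div, div_self hβ.ne', Real.rpow_one]
          rw [this]
          calc (y ^ β) ^ (1/β) < (δ / x ^ α) ^ (1/β) :=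
                Real.rpow_lt_rpow (Real.rpow_nonneg hy1.1.le _) hyβ (by positivity)
            _ = δ ^ (1/β) * x ^ r := by
                rw [Real.div_rpow hδ.le hxα.le, ← Real.rpow_mul hx0.le,
                  div_eq_mul_inv, ← Real.rpow_neg hx0.le]
                congr 1
                rw [hr]; field_simp
        calc volume (Prod.mk x ⁻¹' E₂) ≤ volume (Ioo 0 (δ ^ (1/β) * x ^ r)) :=
              measure_mono hsub2
          _ = ENNReal.ofReal (δ ^ (1/β) * x ^ r) := by rw [Real.volume_Ioo, sub_zero]
      · rw [indicator_of_notMem hx]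
        have : Prod.mk x ⁻¹' E₂ = ∅ := by
          ext y; simp only [mem_preimage, mem_empty_iff_false, iff_false]
          rintro ⟨-, hx', -⟩; exact hx hx'
        simp [this]
    -- integrability
    have hint : IntegrableOn (fun x : ℝ => δ ^ (1/β) * x ^ r) (Ioi t) :=
      (integrableOn_Ioi_rpow_of_lt hr1 ht0).const_mul _
    have hval : ∫ x in Ioi t, δ ^ (1/β) * x ^ r = δ ^ (1/α) * (β / (α - β)) := by
      rw [integral_const_mul, integral_Ioi_rpow_of_lt hr1 ht0]
      have h1 : t ^ (r + 1) = δ ^ ((1/α) * (r + 1)) := by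
        rw [ht, ← Real.rpow_mul hδ.le]
      have hr2 : r + 1 = (β - α) / β := by rw [hr]; field_simp; ring
      have h2 : δ ^ (1/β) * δ ^ (1/α * (r + 1)) = δ ^ (1/α) := by
        rw [← Real.rpow_add hδ]; congr 1; rw [hr2]; field_simp; ring
      have h3 : δ ^ (1/β) * (-δ ^ (1/α * (r+1)) / (r + 1)) =
          -(δ ^ (1/β) * δ ^ (1/α * (r+1))) / (r + 1) := by ring
      rw [h1, h3, h2, hr2]
      have hne : β - α ≠ 0 := by linarith
      field_simp
      ring
    -- volume E₂ bound
    have hE₂le : volume E₂ ≤ ENNReal.ofReal (δ ^ (1/α) * (β / (α - β))) := by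
      rw [Measure.volume_eq_prod, Measure.prod_apply hmeas₂]
      calc ∫⁻ x, volume (Prod.mk x ⁻¹' E₂) ≤
            ∫⁻ x, (Ici t).indicator (fun x => ENNReal.ofReal (δ ^ (1/β) * x ^ r)) x :=
              lintegral_mono hslice
        _ = ∫⁻ x in Ici t, ENNReal.ofReal (δ ^ (1/β) * x ^ r) := by
              rw [lintegral_indicator measurableSet_Ici _]
        _ = ∫⁻ x in Ioi t, ENNReal.ofReal (δ ^ (1/β) * x ^ r) :=
              (setLIntegral_congr (Ioi_ae_eq_Ici (μ := volume) (a := t))).symm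
        _ = ENNReal.ofReal (∫ x in Ioi t, δ ^ (1/β) * x ^ r) := by
              rw [← ofReal_integral_eq_lintegral_ofReal hint]
              filter_upwards [ae_restrict_mem measurableSet_Ioi] with x hx
              have hx0 : 0 < x := ht0.trans hx
              positivity
        _ = ENNReal.ofReal (δ ^ (1/α) * (β / (α - β))) := by rw [hval]
    have hbound : volume E ≤ ENNReal.ofReal t + ENNReal.ofReal (δ ^ (1/α) * (β / (α - β))) := by
      calc volume E ≤ volume ((Ioo (0:ℝ) t ×ˢ Ioo (0:ℝ) 1) ∪ E₂) := measure_mono hcover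
        _ ≤ volume (Ioo (0:ℝ) t ×ˢ Ioo (0:ℝ) 1) + volume E₂ := measure_union_le _ _
        _ ≤ ENNReal.ofReal t + ENNReal.ofReal (δ ^ (1/α) * (β / (α - β))) := by
              gcongr
              rw [Measure.volume_eq_prod, Measure.prod_prod, Real.volume_Ioo, Real.volume_Ioo,
                sub_zero, sub_zero, ENNReal.ofReal_one, mul_one]
    calc (volume E).toReal ≤
          (ENNReal.ofReal t + ENNReal.ofReal (δ ^ (1/α) * (β / (α - β)))).toReal :=
            ENNReal.toReal_mono (by finiteness) hbound
      _ = t + δ ^ (1/α) * (β / (α - β)) := by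
            rw [ENNReal.toReal_add ENNReal.ofReal_ne_top ENNReal.ofReal_ne_top,
              ENNReal.toReal_ofReal ht0.le,
              ENNReal.toReal_ofReal (by positivity)]
      _ = (1 + β / (α - β)) * δ ^ (1/α) := by rw [ht]; ring
end

section
/- For o ≥ 1, the function |f|^{-ε} with f(x,y) = |x|^o + |y|^o is integrable on the unit square if and only if ε < 2/o. In particular the integrability index η of x ↦ |x|^o + |y|^o equals 2/o. -/
open MeasureTheory Set ENNReal

private lemma key_upper {o ε x y : ℝ} (ho : 0 < o) (hε : 0 < ε) (hx : 0 < x) (hy : 0 < y) :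
    (x ^ o + y ^ o) ^ (-ε) ≤ x ^ (-(ε * o) / 2) * y ^ (-(ε * o) / 2) := by
  have hxo : (0:ℝ) < x ^ (o/2) := Real.rpow_pos_of_pos hx _
  have hyo : (0:ℝ) < y ^ (o/2) := Real.rpow_pos_of_pos hy _
  have hx2 : x ^ o = x ^ (o/2) * x ^ (o/2) := by
    rw [← Real.rpow_add hx]; norm_num
  have hy2 : y ^ o = y ^ (o/2) * y ^ (o/2) := by
    rw [← Real.rpow_add hy]; norm_num
  have hA : x ^ (o/2) * y ^ (o/2) ≤ x ^ o + y ^ o := by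
    nlinarith [sq_nonneg (x ^ (o/2) - y ^ (o/2)), mul_pos hxo hyo]
  calc (x ^ o + y ^ o) ^ (-ε)
      ≤ (x ^ (o/2) * y ^ (o/2)) ^ (-ε) :=
        Real.rpow_le_rpow_of_nonpos (mul_pos hxo hyo) hA (neg_nonpos.mpr hε.le)
    _ = x ^ (-(ε * o) / 2) * y ^ (-(ε * o) / 2) := by
        rw [Real.mul_rpow hxo.le hyo.le, ← Real.rpow_mul hx.le, ← Real.rpow_mul hy.le,
          show o/2 * -ε = -(ε * o) / 2 by ring]

private lemma key_lower {o ε x y : ℝ} (ho : 0 < o) (hε : 0 < ε) (hx : 0 < x) (hy : 0 < y)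
    (hyx : y ≤ x) : 2 ^ (-ε) * x ^ (-(ε * o)) ≤ (x ^ o + y ^ o) ^ (-ε) := by
  have h1 : x ^ o + y ^ o ≤ 2 * x ^ o := by
    have := Real.rpow_le_rpow hy.le hyx ho.le; linarith
  have h0 : (0:ℝ) < x ^ o + y ^ o := by positivity
  have heq : (2 * x ^ o : ℝ) ^ (-ε) = 2 ^ (-ε) * x ^ (-(ε * o)) := by
    rw [Real.mul_rpow (by norm_num) (Real.rpow_nonneg hx.le o), ← Real.rpow_mul hx.le,
      show o * -ε = -(ε * o) by ring]
  rw [← heq]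
  exact Real.rpow_le_rpow_of_nonpos h0 h1 (neg_nonpos.mpr hε.le)

/-- For o ≥ 1, (|x|^o + |y|^o)^(−ε) is integrable on the unit square iff ε < 2/o. -/
theorem integrability_index_sum (o ε : ℝ) (ho : 1 ≤ o) (hε : 0 < ε) :
    IntegrableOn (fun p : ℝ × ℝ => (|p.1| ^ o + |p.2| ^ o) ^ (-ε))
      (Ioo (0 : ℝ) 1 ×ˢ Ioo (0 : ℝ) 1) ↔ ε < 2 / o := by
  have ho0 : 0 < o := lt_of_lt_of_le one_pos ho
  have hmeas : Measurable (fun p : ℝ × ℝ => (|p.1| ^ o + |p.2| ^ o) ^ (-ε)) :=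
    ((measurable_fst.abs.pow_const o).add (measurable_snd.abs.pow_const o)).pow_const (-ε)
  have hnonneg : ∀ p : ℝ × ℝ, 0 ≤ (|p.1| ^ o + |p.2| ^ o) ^ (-ε) :=
    fun p => Real.rpow_nonneg (by positivity) _
  set F : ℝ × ℝ → ℝ≥0∞ := fun p => ENNReal.ofReal ((|p.1| ^ o + |p.2| ^ o) ^ (-ε)) with hF
  have hFmeas : Measurable F := hmeas.ennreal_ofReal
  constructor
  · intro h
    by_contra hc
    push_neg at hc
    have hs : 2 ≤ ε * o := by
      rw [div_le_iff₀ ho0] at hc; linarith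
    have hfin : (∫⁻ p in Ioo (0:ℝ) 1 ×ˢ Ioo (0:ℝ) 1, F p) < ⊤ := by
      have h2 := h.2
      rwa [hasFiniteIntegral_iff_ofReal (Filter.Eventually.of_forall hnonneg)] at h2
    have heq : (∫⁻ p in Ioo (0:ℝ) 1 ×ˢ Ioo (0:ℝ) 1, F p)
        = ∫⁻ x in Ioo (0:ℝ) 1, ∫⁻ y in Ioo (0:ℝ) 1, F (x, y) := by
      rw [show (volume : Measure (ℝ × ℝ)) = Measure.prod volume volume from Measure.volume_eq_prod ..,
        ← Measure.prod_restrict, lintegral_prod _ hFmeas.aemeasurable]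
    -- inner bound
    have hinner : ∀ x ∈ Ioo (0:ℝ) 1,
        ENNReal.ofReal (2 ^ (-ε) * x ^ (1 - ε * o)) ≤ ∫⁻ y in Ioo (0:ℝ) 1, F (x, y) := by
      intro x hx
      have hsub : Ioo (0:ℝ) x ⊆ Ioo 0 1 := Ioo_subset_Ioo le_rfl hx.2.le
      calc ENNReal.ofReal (2 ^ (-ε) * x ^ (1 - ε * o))
          = ENNReal.ofReal (2 ^ (-ε) * x ^ (-(ε * o))) * volume (Ioo (0:ℝ) x) := by
            rw [Real.volume_Ioo, sub_zero, ← ENNReal.ofReal_mul (mul_nonneg (Real.rpow_nonneg (by norm_num) _) (Real.rpow_nonneg hx.1.le _))]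
            congr 1
            rw [mul_assoc, ← Real.rpow_add_one hx.1.ne' (-(ε * o)),
              show -(ε * o) + 1 = 1 - ε * o by ring]
        _ = ∫⁻ _ in Ioo (0:ℝ) x, ENNReal.ofReal (2 ^ (-ε) * x ^ (-(ε * o))) := by
            rw [setLIntegral_const]
        _ ≤ ∫⁻ y in Ioo (0:ℝ) x, F (x, y) := by
            refine setLIntegral_mono' measurableSet_Ioo fun y hy => ?_
            refine ENNReal.ofReal_le_ofReal ?_
            have := key_lower ho0 hε hx.1 hy.1 hy.2.le
            rwa [abs_of_pos hx.1, abs_of_pos hy.1]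
        _ ≤ ∫⁻ y in Ioo (0:ℝ) 1, F (x, y) := lintegral_mono_set hsub
    have houter : (∫⁻ x in Ioo (0:ℝ) 1, ENNReal.ofReal (2 ^ (-ε) * x ^ (1 - ε * o))) = ⊤ := by
      by_contra hne
      have hmeas1 : Measurable fun x : ℝ => 2 ^ (-ε) * x ^ (1 - ε * o) :=
        (measurable_id.pow_const (1 - ε * o)).const_mul _
      have hint : IntegrableOn (fun x : ℝ => 2 ^ (-ε) * x ^ (1 - ε * o)) (Ioo (0:ℝ) 1) := by
        refine ⟨hmeas1.aestronglyMeasurable, ?_⟩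
        rw [hasFiniteIntegral_iff_ofReal]
        · exact lt_top_iff_ne_top.mpr hne
        · filter_upwards [ae_restrict_mem measurableSet_Ioo] with x hx
          have : (0:ℝ) < x := hx.1
          positivity
      have hint2 : IntegrableOn (fun x : ℝ => x ^ (1 - ε * o)) (Ioo (0:ℝ) 1) := by
        have h3 := hint.const_mul ((2:ℝ) ^ ε)
        have hfun : (fun x : ℝ => (2:ℝ) ^ ε * (2 ^ (-ε) * x ^ (1 - ε * o)))
            = fun x : ℝ => x ^ (1 - ε * o) := by
          funext x
          rw [← mul_assoc, ← Real.rpow_add (by norm_num : (0:ℝ) < 2)]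
          simp
        rw [hfun] at h3
        exact h3
      rw [intervalIntegral.integrableOn_Ioo_rpow_iff one_pos] at hint2
      linarith
    have : (∫⁻ x in Ioo (0:ℝ) 1, ENNReal.ofReal (2 ^ (-ε) * x ^ (1 - ε * o)))
        ≤ ∫⁻ x in Ioo (0:ℝ) 1, ∫⁻ y in Ioo (0:ℝ) 1, F (x, y) :=
      setLIntegral_mono' measurableSet_Ioo hinner
    rw [houter, top_le_iff] at this
    rw [heq, this] at hfin
    exact absurd hfin (by simp)
  · intro h
    have hs2 : ε * o < 2 := by
      rw [lt_div_iff₀ ho0] at h; linarith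
    have h1 : IntegrableOn (fun x : ℝ => x ^ (-(ε * o) / 2)) (Ioo (0:ℝ) 1) := by
      rw [intervalIntegral.integrableOn_Ioo_rpow_iff one_pos]; linarith
    have h2 : Integrable (fun p : ℝ × ℝ => p.1 ^ (-(ε * o) / 2) * p.2 ^ (-(ε * o) / 2))
        ((volume.restrict (Ioo (0:ℝ) 1)).prod (volume.restrict (Ioo (0:ℝ) 1))) :=
      h1.mul_prod h1
    rw [Measure.prod_restrict, ← Measure.volume_eq_prod] at h2
    refine h2.mono' (hmeas.aestronglyMeasurable.restrict) ?_
    filter_upwards [ae_restrict_mem (measurableSet_Ioo.prod measurableSet_Ioo)] with p hp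
    obtain ⟨⟨hx0, _⟩, ⟨hy0, _⟩⟩ := hp
    rw [Real.norm_eq_abs, abs_of_nonneg (hnonneg p)]
    have h3 := key_upper ho0 hε hx0 hy0
    rwa [abs_of_pos hx0, abs_of_pos hy0]
end

section
/- Van der Corput lemma (first-derivative case): if h is C² on [a,b] with h' monotone and |h'(x)| ≥ A > 0 on [a,b], and φ is C¹ on [a,b], then |∫_a^b e^{i h(x)} φ(x) dx| ≤ c·A^{-1}·(|φ(b)| + ∫_a^b |φ'(x)| dx) for an absolute constant c. -/
/-!
Writing `e^{ih} = (1/h') · (-i e^{ih})'` and integrating by parts bounds `∫_a^x e^{ih}` by `4/A`: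
the boundary terms contribute `2/A`, and since `1/h'` is monotone (`h'` is monotone and cannot
change sign), `∫ |(1/h')'|` is its total variation `|1/h'(x) - 1/h'(a)| ≤ 2/A`. A second
integration by parts, of `φ` against the primitive `G x = ∫_a^x e^{ih}`, which vanishes at `a` and
is bounded by `4/A`, gives the theorem with `c = 4`.
-/

open Set intervalIntegral MeasureTheory Complex

section

variable {a b : ℝ}

theorem ContDiffOn.hasDerivAt_deriv_of_mem_Ioo {E : Type*} [NormedAddCommGroup E]
    [NormedSpace ℝ E] {f : ℝ → E} (hf : ContDiffOn ℝ 1 f (Icc a b)) {x : ℝ}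
    (hx : x ∈ Ioo a b) : HasDerivAt f (deriv f x) x :=
  ((hf.differentiableOn one_ne_zero x (Ioo_subset_Icc_self hx)).differentiableAt
    (Icc_mem_nhds hx.1 hx.2)).hasDerivAt

theorem ContDiffOn.intervalIntegrable_deriv {E : Type*} [NormedAddCommGroup E]
    [NormedSpace ℝ E] {f : ℝ → E} (hab : a < b) (hf : ContDiffOn ℝ 1 f (Icc a b)) :
    IntervalIntegrable (deriv f) volume a b := by
  rw [intervalIntegrable_iff_integrableOn_Ioo_of_le hab.le]
  have hcont : ContinuousOn (derivWithin f (Icc a b)) (Icc a b) :=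
    hf.continuousOn_derivWithin (uniqueDiffOn_Icc hab) le_rfl
  refine (hcont.integrableOn_Icc.mono_set Ioo_subset_Icc_self).congr_fun
    (fun x hx => ?_) measurableSet_Ioo
  exact derivWithin_of_mem_nhds (Icc_mem_nhds hx.1 hx.2)

theorem ContinuousOn.hasDerivAt_integral_of_mem_Ioo {E : Type*} [NormedAddCommGroup E]
    [NormedSpace ℝ E] [CompleteSpace E] {f : ℝ → E} (hf : ContinuousOn f (Icc a b)) {x : ℝ}
    (hx : x ∈ Ioo a b) : HasDerivAt (fun y => ∫ t in a..y, f t) (f x) x :=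
  integral_hasDerivAt_right
    ((hf.mono (Icc_subset_Icc_right hx.2.le)).intervalIntegrable_of_Icc hx.1.le)
    ((hf.mono Ioo_subset_Icc_self).stronglyMeasurableAtFilter isOpen_Ioo x hx)
    (hf.continuousAt (Icc_mem_nhds hx.1 hx.2))

theorem MonotoneOn.antitoneOn_inv_of_ne_zero {f : ℝ → ℝ} {s : Set ℝ} (hf : MonotoneOn f s)
    (hs : IsPreconnected s) (hc : ContinuousOn f s) (h0 : ∀ x ∈ s, f x ≠ 0) :
    AntitoneOn (fun x => (f x)⁻¹) s := by
  intro x hx y hy hxy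
  have hfxy := hf hx hy hxy
  have hx0 := h0 x hx
  have hy0 := h0 y hy
  have hsign : 0 < f x * f y := by
    by_contra! hneg
    have hfx : f x ≤ 0 := by
      by_contra! hfx
      nlinarith
    have hfy : 0 ≤ f y := by
      by_contra! hfy
      nlinarith
    obtain ⟨z, hz, hfz⟩ := hs.intermediate_value hx hy hc ⟨hfx, hfy⟩
    exact h0 z hz hfz
  calc (f y)⁻¹ = (f x)⁻¹ - (f y - f x) / (f x * f y) := by field_simp; ring
    _ ≤ (f x)⁻¹ := sub_le_self _ (div_nonneg (sub_nonneg.2 hfxy) hsign.le)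

theorem AntitoneOn.monotoneOn_inv_of_ne_zero {f : ℝ → ℝ} {s : Set ℝ} (hf : AntitoneOn f s)
    (hs : IsPreconnected s) (hc : ContinuousOn f s) (h0 : ∀ x ∈ s, f x ≠ 0) :
    MonotoneOn (fun x => (f x)⁻¹) s := by
  have := (hf.neg.antitoneOn_inv_of_ne_zero hs hc.neg fun x hx => neg_ne_zero.2 (h0 x hx)).neg
  simpa only [inv_neg, neg_neg] using this

theorem integral_abs_deriv_eq_sub_of_monotoneOn {g g' : ℝ → ℝ} (hab : a ≤ b)
    (hg : ContinuousOn g (Icc a b)) (hderiv : ∀ x ∈ Ioo a b, HasDerivAt g (g' x) x)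
    (hint : IntervalIntegrable g' volume a b) (hmono : MonotoneOn g (Ioo a b)) :
    ∫ x in a..b, |g' x| = g b - g a := by
  refine integral_eq_sub_of_hasDerivAt_of_le hab hg (fun x hx => ?_) hint.abs
  have hnonneg : 0 ≤ g' x :=
    (hderiv x hx).hasDerivWithinAt.derivWithin (isOpen_Ioo.uniqueDiffWithinAt hx) ▸
      hmono.derivWithin_nonneg
  rw [abs_of_nonneg hnonneg]
  exact hderiv x hx

theorem integral_abs_deriv_eq_abs_sub_of_monotoneOn_or_antitoneOn {g g' : ℝ → ℝ}
    (hab : a ≤ b) (hg : ContinuousOn g (Icc a b)) (hderiv : ∀ x ∈ Ioo a b, HasDerivAt g (g' x) x)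
    (hint : IntervalIntegrable g' volume a b)
    (hmono : MonotoneOn g (Ioo a b) ∨ AntitoneOn g (Ioo a b)) :
    ∫ x in a..b, |g' x| = |g b - g a| := by
  have hnonneg : 0 ≤ ∫ x in a..b, |g' x| := integral_nonneg hab fun _ _ => abs_nonneg _
  rcases hmono with hmono | hanti
  · rw [integral_abs_deriv_eq_sub_of_monotoneOn hab hg hderiv hint hmono] at hnonneg ⊢
    exact (abs_of_nonneg hnonneg).symm
  · have := integral_abs_deriv_eq_sub_of_monotoneOn hab hg.neg (fun x hx => (hderiv x hx).neg)
      hint.neg hanti.neg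
    simp only [abs_neg, Pi.neg_apply] at this
    rw [this] at hnonneg ⊢
    rw [abs_of_nonpos (by linarith)]
    ring

section IntegrationByParts

variable {𝕜 : Type*} [NontriviallyNormedField 𝕜] [NormedAlgebra ℝ 𝕜]
  {E : Type*} [NormedAddCommGroup E] [NormedSpace 𝕜 E] [NormedSpace ℝ E] [CompleteSpace E]
  [IsScalarTower ℝ 𝕜 E]

theorem norm_integral_smul_deriv_le {u u' : ℝ → 𝕜} {v v' : ℝ → E} {M : ℝ}
    (hab : a ≤ b) (hu : ContinuousOn u (Icc a b)) (hv : ContinuousOn v (Icc a b))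
    (huu' : ∀ x ∈ Ioo a b, HasDerivAt u (u' x) x) (hvv' : ∀ x ∈ Ioo a b, HasDerivAt v (v' x) x)
    (hu' : IntervalIntegrable u' volume a b) (hv' : IntervalIntegrable v' volume a b)
    (hM : ∀ x ∈ Icc a b, ‖v x‖ ≤ M) :
    ‖∫ x in a..b, u x • v' x‖ ≤ ‖u b • v b - u a • v a‖ + M * ∫ x in a..b, ‖u' x‖ := by
  rw [integral_smul_deriv_eq_deriv_smul_of_hasDerivAt (by rwa [uIcc_of_le hab])
    (by rwa [uIcc_of_le hab]) (by rwa [min_eq_left hab, max_eq_right hab])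
    (by rwa [min_eq_left hab, max_eq_right hab]) hu' hv',
    ← intervalIntegral.integral_const_mul]
  refine (norm_sub_le _ _).trans (add_le_add le_rfl ?_)
  refine norm_integral_le_of_norm_le hab (ae_of_all _ fun x hx => ?_) (hu'.norm.const_mul M)
  rw [norm_smul, mul_comm]
  exact mul_le_mul_of_nonneg_right (hM x (Ioc_subset_Icc_self hx)) (norm_nonneg _)

theorem norm_integral_smul_le_of_norm_primitive_le {φ : ℝ → 𝕜} {e : ℝ → E} {M : ℝ} (hab : a < b)
    (hφ : ContDiffOn ℝ 1 φ (Icc a b)) (he : ContinuousOn e (Icc a b))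
    (hM : ∀ x ∈ Icc a b, ‖∫ t in a..x, e t‖ ≤ M) :
    ‖∫ x in a..b, φ x • e x‖ ≤ M * (‖φ b‖ + ∫ x in a..b, ‖deriv φ x‖) := by
  have hGcont : ContinuousOn (fun x => ∫ t in a..x, e t) (Icc a b) := by
    simpa only [uIcc_of_le hab.le] using
      continuousOn_primitive_interval (he.integrableOn_Icc.mono_set (uIcc_of_le hab.le).subset)
  have hbound := norm_integral_smul_deriv_le hab.le hφ.continuousOn hGcont
    (fun x hx => hφ.hasDerivAt_deriv_of_mem_Ioo hx)
    (fun x hx => he.hasDerivAt_integral_of_mem_Ioo hx)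
    (hφ.intervalIntegrable_deriv hab) (he.intervalIntegrable_of_Icc hab.le) hM
  have hb := mul_le_mul_of_nonneg_left (hM b (right_mem_Icc.2 hab.le)) (norm_nonneg (φ b))
  simp only [integral_same, smul_zero, sub_zero, norm_smul] at hbound
  linarith

end IntegrationByParts

theorem norm_integral_cexp_I_mul_le {h h' : ℝ → ℝ} {A : ℝ} (hab : a < b) (hA : 0 < A)
    (hh : ContinuousOn h (Icc a b)) (hderiv : ∀ x ∈ Ioo a b, HasDerivAt h (h' x) x)
    (hh' : ContDiffOn ℝ 1 h' (Icc a b))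
    (hmono : MonotoneOn h' (Ioo a b) ∨ AntitoneOn h' (Ioo a b))
    (hlow : ∀ x ∈ Ioo a b, A ≤ |h' x|) :
    ‖∫ x in a..b, exp (I * h x)‖ ≤ 4 / A := by
  have hlow' : ∀ x ∈ Icc a b, A ≤ |h' x| := by
    rw [← closure_Ioo hab.ne] at hh' ⊢
    exact le_on_closure hlow continuousOn_const hh'.continuousOn.abs
  have hne : ∀ x ∈ Icc a b, h' x ≠ 0 := fun x hx => abs_pos.1 (hA.trans_le (hlow' x hx))
  set g : ℝ → ℝ := fun x => (h' x)⁻¹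
  have hg : ContDiffOn ℝ 1 g (Icc a b) := hh'.inv hne
  have hg_le : ∀ x ∈ Icc a b, ‖g x‖ ≤ A⁻¹ := fun x hx => by
    simpa only [g, norm_inv, Real.norm_eq_abs] using inv_anti₀ hA (hlow' x hx)
  have hg_mono : MonotoneOn g (Ioo a b) ∨ AntitoneOn g (Ioo a b) := by
    have hc := hh'.continuousOn.mono Ioo_subset_Icc_self
    have hne' := fun x hx => hne x (Ioo_subset_Icc_self hx)
    exact hmono.symm.imp (·.monotoneOn_inv_of_ne_zero isPreconnected_Ioo hc hne')
      (·.antitoneOn_inv_of_ne_zero isPreconnected_Ioo hc hne')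
  set v : ℝ → ℂ := fun x => -I * exp (I * h x)
  have hv : ContinuousOn v (Icc a b) := by fun_prop
  have hv' : ∀ x ∈ Ioo a b, HasDerivAt v (h' x • exp (I * h x)) x := fun x hx => by
    refine ((((hderiv x hx).ofReal_comp.const_mul I).cexp).const_mul (-I)).congr_deriv ?_
    rw [Complex.real_smul]
    ring_nf
    rw [I_sq]
    ring
  have hv_norm : ∀ x ∈ Icc a b, ‖v x‖ ≤ 1 := fun x _ => by
    simp [v, norm_exp]
  have hvar : ∫ x in a..b, ‖deriv g x‖ ≤ A⁻¹ + A⁻¹ := by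
    simp only [Real.norm_eq_abs]
    rw [integral_abs_deriv_eq_abs_sub_of_monotoneOn_or_antitoneOn hab.le hg.continuousOn
      (fun x hx => hg.hasDerivAt_deriv_of_mem_Ioo hx) (hg.intervalIntegrable_deriv hab) hg_mono]
    exact (abs_sub _ _).trans (add_le_add (hg_le b (right_mem_Icc.2 hab.le))
      (hg_le a (left_mem_Icc.2 hab.le)))
  have hgv : ∀ x ∈ Icc a b, ‖g x • v x‖ ≤ A⁻¹ := fun x hx => by
    rw [norm_smul]
    simpa using mul_le_mul (hg_le x hx) (hv_norm x hx) (norm_nonneg _) (inv_pos.2 hA).le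
  calc ‖∫ x in a..b, exp (I * h x)‖ = ‖∫ x in a..b, g x • (h' x • exp (I * h x))‖ := by
        refine congrArg _ (integral_congr fun x hx => ?_)
        rw [uIcc_of_le hab.le] at hx
        simp only [g, smul_smul, inv_mul_cancel₀ (hne x hx), one_smul]
    _ ≤ ‖g b • v b - g a • v a‖ + 1 * ∫ x in a..b, ‖deriv g x‖ :=
        norm_integral_smul_deriv_le hab.le hg.continuousOn hv
          (fun x hx => hg.hasDerivAt_deriv_of_mem_Ioo hx) hv' (hg.intervalIntegrable_deriv hab)
          ((hh'.continuousOn.smul (by fun_prop)).intervalIntegrable_of_Icc hab.le) hv_norm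
    _ ≤ (A⁻¹ + A⁻¹) + 1 * (A⁻¹ + A⁻¹) := by
        refine add_le_add ((norm_sub_le _ _).trans (add_le_add ?_ ?_))
          (mul_le_mul_of_nonneg_left hvar zero_le_one)
        · exact hgv b (right_mem_Icc.2 hab.le)
        · exact hgv a (left_mem_Icc.2 hab.le)
    _ = 4 / A := by ring

theorem norm_integral_cexp_I_mul_le_of_contDiffOn {h : ℝ → ℝ} {A : ℝ} (hab : a < b)
    (hA : 0 < A) (hh : ContDiffOn ℝ 2 h (Icc a b))
    (hmono : MonotoneOn (deriv h) (Ioo a b) ∨ AntitoneOn (deriv h) (Ioo a b))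
    (hlow : ∀ x ∈ Ioo a b, A ≤ |deriv h x|) :
    ‖∫ x in a..b, exp (I * h x)‖ ≤ 4 / A := by
  -- `deriv h` may be junk at the endpoints, so work with the one-sided derivative instead
  have hh'_eq : EqOn (derivWithin h (Icc a b)) (deriv h) (Ioo a b) := fun x hx =>
    derivWithin_of_mem_nhds (Icc_mem_nhds hx.1 hx.2)
  refine norm_integral_cexp_I_mul_le hab hA hh.continuousOn (fun x hx => ?_)
    (hh.derivWithin (uniqueDiffOn_Icc hab) le_rfl)
    (hmono.imp (·.congr hh'_eq.symm) (·.congr hh'_eq.symm)) (fun x hx => hh'_eq hx ▸ hlow x hx)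
  rw [hh'_eq hx]
  exact (hh.of_le one_le_two).hasDerivAt_deriv_of_mem_Ioo hx

end

/-- Van der Corput lemma, first-derivative case: if h is C² on [a,b] with h' monotone
    and |h'| ≥ A > 0, and φ is C¹, then |∫ e^{ih} φ| ≤ c A⁻¹ (|φ(b)| + ∫ |φ'|). -/
theorem van_der_corput_first :
    ∃ c : ℝ, 0 < c ∧ ∀ (a b A : ℝ) (h : ℝ → ℝ) (φ : ℝ → ℂ),
      a < b → 0 < A →
      ContDiffOn ℝ 2 h (Icc a b) →
      (MonotoneOn (deriv h) (Icc a b) ∨ AntitoneOn (deriv h) (Icc a b)) →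
      (∀ x ∈ Icc a b, A ≤ |deriv h x|) →
      ContDiffOn ℝ 1 φ (Icc a b) →
      ‖∫ x in a..b, Complex.exp (Complex.I * (h x : ℂ)) * φ x‖ ≤
        c * A⁻¹ * (‖φ b‖ + ∫ x in a..b, ‖deriv φ x‖) := by
  refine ⟨4, four_pos, fun a b A h φ hab hA hh hmono hlow hφ => ?_⟩
  have he : ContinuousOn (fun x => exp (I * h x)) (Icc a b) := by
    have := hh.continuousOn
    fun_prop
  have hprimitive : ∀ x ∈ Icc a b, ‖∫ t in a..x, exp (I * h t)‖ ≤ 4 / A := by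
    rintro x ⟨hax, hxb⟩
    rcases hax.eq_or_lt with rfl | hax
    · simp only [integral_same, norm_zero]
      positivity
    have hsub : Ioo a x ⊆ Icc a b := Ioo_subset_Icc_self.trans (Icc_subset_Icc_right hxb)
    exact norm_integral_cexp_I_mul_le_of_contDiffOn hax hA (hh.mono (Icc_subset_Icc_right hxb))
      (hmono.imp (·.mono hsub) (·.mono hsub)) (fun y hy => hlow y (hsub hy))
  have := norm_integral_smul_le_of_norm_primitive_le hab hφ he hprimitive
  simp_rw [smul_eq_mul, mul_comm (φ _)] at this
  rwa [← div_eq_mul_inv]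
end
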